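/- There is no unbiased estimator of an IPM on any family of distributions containing all mixtures of two fixed distributions P₀ ≠ P₁ with D(P₀,P₁) > 0. Precisely: for any m, n ∈ ℕ and any measurable function D̂ : X^m × X^n → ℝ, it cannot hold that E_{X∼P^m, Y∼Q^n}[D̂(X,Y)] = D(P,Q) for all P in the mixture family {(1−α)P₀ + αP₁ : α ∈ [0,1]} and Q = ½P₀ + ½P₁, because α ↦ E_{X∼((1−α)P₀+αP₁)^m}[D̂] is a polynomial in α of degree at most m, while α ↦ D((1−α)P₀+αP₁, ½P₀+½P₁) = |½−α|·D(P₀,P₁) is not a polynomial. -/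

import Mathlib

open MeasureTheory

/-- The integral probability metric defined by a class `F` of functions. -/
noncomputable def IPM {X : Type*} [MeasurableSpace X] (F : Set (X → ℝ))
    (P Q : Measure X) : ℝ :=
  sSup ((fun f => ∫ x, f x ∂P - ∫ x, f x ∂Q) '' F)

/-- The mixture `(1-α) P₀ + α P₁`. -/
noncomputable def mix {X : Type*} [MeasurableSpace X] (P₀ P₁ : Measure X) (α : ℝ) :
    Measure X :=
  ENNReal.ofReal (1 - α) • P₀ + ENNReal.ofReal α • P₁

/-!
Write `c = D(P₀, P₁) > 0`. Each coordinate of a sample from `((1-α)P₀ + αP₁)^m` is drawn from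
`P₀` or `P₁` independently, so its law splits over the `2^m` patterns `s` of components, with
weights `∏ᵢ (1-α or α)`. Hence the expectation of any estimator is a polynomial in `α`, in
particular differentiable. On the other hand the IPM of two mixtures is `|β - α| c`, because `F`
is closed under negation, and `α ↦ |1/2 - α| c` is not differentiable at `1/2`.
-/

open Set
open scoped NNReal Pointwise

theorem MeasureTheory.Measure.pi_sum_smul {ι κ X : Type*} [Fintype ι] [DecidableEq ι]
    [Fintype κ] [MeasurableSpace X] (μ : κ → Measure X) [∀ k, IsFiniteMeasure (μ k)] (c : κ → ℝ≥0) :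
    Measure.pi (fun _ : ι => ∑ k, c k • μ k)
      = ∑ s : ι → κ, (∏ i, c (s i)) • Measure.pi (fun i => μ (s i)) := by
  refine Measure.pi_eq fun B _ => ?_
  simp only [Measure.coe_finsetSum, Finset.sum_apply, Measure.smul_apply, Measure.pi_pi,
    ENNReal.smul_def, smul_eq_mul, ENNReal.ofNNReal_finsetProd, ← Finset.prod_mul_distrib]
  rw [Finset.prod_univ_sum, Fintype.piFinset_univ]

theorem MeasureTheory.integral_pi_sum_smul {ι κ X : Type*} [Fintype ι] [DecidableEq ι]
    [Fintype κ] [MeasurableSpace X] (μ : κ → Measure X) [∀ k, IsFiniteMeasure (μ k)] (c : κ → ℝ≥0)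
    {f : (ι → X) → ℝ} (hf : Integrable f (Measure.pi fun _ : ι => ∑ k, c k • μ k)) :
    ∫ x, f x ∂Measure.pi (fun _ : ι => ∑ k, c k • μ k)
      = ∑ s : ι → κ, (∏ i, (c (s i) : ℝ)) * ∫ x, f x ∂Measure.pi (fun i => μ (s i)) := by
  rw [Measure.pi_sum_smul] at hf ⊢
  rw [integral_finsetSum_measure (integrable_finsetSum_measure.1 hf)]
  simp only [integral_smul_nnreal_measure, NNReal.smul_def, NNReal.coe_prod, smul_eq_mul]

theorem differentiable_sum_prod_mul {ι : Type*} [Fintype ι] [DecidableEq ι]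
    (K : (ι → Fin 2) → ℝ) :
    Differentiable ℝ fun α : ℝ => ∑ s : ι → Fin 2, (∏ i, ![1 - α, α] (s i)) * K s := by
  have h : ∀ k : Fin 2, Differentiable ℝ fun α : ℝ => ![1 - α, α] k :=
    Fin.forall_fin_two.2 ⟨(differentiable_const 1).sub differentiable_id, differentiable_id⟩
  fun_prop

theorem not_differentiableAt_abs_sub_mul {a c : ℝ} (hc : c ≠ 0) :
    ¬ DifferentiableAt ℝ (fun x => |a - x| * c) a := by
  intro h
  have hcomp : DifferentiableAt ℝ (fun t => |a - (a - t)| * c * c⁻¹) 0 :=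
    ((by simpa using h : DifferentiableAt ℝ (fun x => |a - x| * c) (a - 0)).comp 0
      (by fun_prop)).mul_const _
  simp only [sub_sub_cancel, mul_inv_cancel_right₀ hc] at hcomp
  exact not_differentiableAt_abs_zero hcomp

theorem smul_set_abs_eq_of_neg_eq {S : Set ℝ} (hS : -S = S) (c : ℝ) : |c| • S = c • S := by
  rcases abs_choice c with h | h <;> rw [h]
  rw [neg_smul_set, ← smul_set_neg, hS]

section Mixture

variable {X : Type*} [MeasurableSpace X] (P₀ P₁ : Measure X)

theorem mix_eq_sum (α : ℝ) :
    mix P₀ P₁ α = ∑ k, (![1 - α, α] k).toNNReal • ![P₀, P₁] k := by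
  rw [Fin.sum_univ_two]
  rfl

theorem integral_mix {α : ℝ} (hα : α ∈ Icc (0 : ℝ) 1) {f : X → ℝ}
    (h₀ : Integrable f P₀) (h₁ : Integrable f P₁) :
    ∫ x, f x ∂mix P₀ P₁ α = (1 - α) * ∫ x, f x ∂P₀ + α * ∫ x, f x ∂P₁ := by
  rw [mix, integral_add_measure (h₀.smul_measure ENNReal.ofReal_ne_top)
      (h₁.smul_measure ENNReal.ofReal_ne_top), integral_smul_measure, integral_smul_measure,
    ENNReal.toReal_ofReal (sub_nonneg.2 hα.2), ENNReal.toReal_ofReal hα.1, smul_eq_mul,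
    smul_eq_mul]

theorem IPM_mix_mix {F : Set (X → ℝ)} (hint : ∀ f ∈ F, Integrable f P₀ ∧ Integrable f P₁)
    (hneg : ∀ f ∈ F, (fun x => -f x) ∈ F) {α β : ℝ} (hα : α ∈ Icc (0 : ℝ) 1)
    (hβ : β ∈ Icc (0 : ℝ) 1) :
    IPM F (mix P₀ P₁ α) (mix P₀ P₁ β) = |β - α| * IPM F P₀ P₁ := by
  set S := (fun f => ∫ x, f x ∂P₀ - ∫ x, f x ∂P₁) '' F
  have hS : -S ⊆ S := by
    rintro r ⟨f, hf, hfr⟩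
    refine ⟨fun x => -f x, hneg f hf, ?_⟩
    simp only [integral_neg] at hfr ⊢
    linarith
  have himage : (fun f => ∫ x, f x ∂mix P₀ P₁ α - ∫ x, f x ∂mix P₀ P₁ β) '' F = (β - α) • S := by
    rw [← image_smul, image_image]
    refine image_congr fun f hf => ?_
    rw [integral_mix P₀ P₁ hα (hint f hf).1 (hint f hf).2,
      integral_mix P₀ P₁ hβ (hint f hf).1 (hint f hf).2, smul_eq_mul]
    ring
  rw [IPM, IPM, himage, ← smul_set_abs_eq_of_neg_eq (hS.antisymm (neg_subset.1 hS)),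
    Real.sSup_smul_of_nonneg (abs_nonneg _), smul_eq_mul]

variable [IsFiniteMeasure P₀] [IsFiniteMeasure P₁]

instance (k : Fin 2) : IsFiniteMeasure (![P₀, P₁] k) := by
  fin_cases k <;> assumption

instance (α : ℝ) : IsFiniteMeasure (mix P₀ P₁ α) := by
  rw [mix_eq_sum]
  infer_instance

theorem integral_pi_mix {ι : Type*} [Fintype ι] [DecidableEq ι] {α : ℝ}
    (hα : α ∈ Icc (0 : ℝ) 1) {f : (ι → X) → ℝ}
    (hf : Integrable f (Measure.pi fun _ : ι => mix P₀ P₁ α)) :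
    ∫ x, f x ∂Measure.pi (fun _ : ι => mix P₀ P₁ α)
      = ∑ s : ι → Fin 2,
          (∏ i, ![1 - α, α] (s i)) * ∫ x, f x ∂Measure.pi (fun i => ![P₀, P₁] (s i)) := by
  have hw : ∀ k, ((![1 - α, α] k).toNNReal : ℝ) = ![1 - α, α] k :=
    Fin.forall_fin_two.2 ⟨Real.coe_toNNReal _ (sub_nonneg.2 hα.2), Real.coe_toNNReal _ hα.1⟩
  simp only [mix_eq_sum] at hf ⊢
  simp only [integral_pi_sum_smul _ _ hf, hw]

end Mixture

theorem no_unbiased_ipm_estimator {X : Type*} [MeasurableSpace X]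
    (F : Set (X → ℝ))
    (hmeas : ∀ f ∈ F, Measurable f)
    (hbdd : ∀ f ∈ F, ∃ C : ℝ, ∀ x, |f x| ≤ C)
    (hneg : ∀ f ∈ F, (fun x => -f x) ∈ F)
    (P₀ P₁ : Measure X) [IsProbabilityMeasure P₀] [IsProbabilityMeasure P₁]
    (hpos : 0 < IPM F P₀ P₁)
    (m n : ℕ)
    (Dhat : (Fin m → X) × (Fin n → X) → ℝ)
    (hDint : ∀ α ∈ Set.Icc (0 : ℝ) 1,
      Integrable Dhat
        ((Measure.pi fun _ : Fin m => mix P₀ P₁ α).prod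
          (Measure.pi fun _ : Fin n => mix P₀ P₁ (1 / 2)))) :
    ¬ (∀ α ∈ Set.Icc (0 : ℝ) 1,
        (∫ xy, Dhat xy
            ∂((Measure.pi fun _ : Fin m => mix P₀ P₁ α).prod
              (Measure.pi fun _ : Fin n => mix P₀ P₁ (1 / 2))))
          = IPM F (mix P₀ P₁ α) (mix P₀ P₁ (1 / 2))) := by
  intro hunbiased
  have hint (P : Measure X) [IsFiniteMeasure P] (f : X → ℝ) (hf : f ∈ F) : Integrable f P :=
    have ⟨C, hC⟩ := hbdd f hf
    .of_bound (hmeas f hf).aestronglyMeasurable C (ae_of_all _ hC)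
  set ν := Measure.pi fun _ : Fin n => mix P₀ P₁ (1 / 2)
  set K : (Fin m → Fin 2) → ℝ := fun s =>
    ∫ x, ∫ y, Dhat (x, y) ∂ν ∂Measure.pi fun i => ![P₀, P₁] (s i)
  have hexpect : ∀ α ∈ Icc (0 : ℝ) 1,
      ∫ xy, Dhat xy ∂(Measure.pi fun _ : Fin m => mix P₀ P₁ α).prod ν
        = ∑ s, (∏ i, ![1 - α, α] (s i)) * K s := fun α hα => by
    rw [integral_prod _ (hDint α hα), integral_pi_mix P₀ P₁ hα (hDint α hα).integral_prod_left]
  refine not_differentiableAt_abs_sub_mul hpos.ne'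
    ((differentiable_sum_prod_mul K (1 / 2)).congr_of_eventuallyEq ?_)
  filter_upwards [Icc_mem_nhds (by norm_num : (0 : ℝ) < 1 / 2) (by norm_num : (1 / 2 : ℝ) < 1)]
    with α hα
  rw [← hexpect α hα, hunbiased α hα,
    IPM_mix_mix P₀ P₁ (fun f hf => ⟨hint P₀ f hf, hint P₁ f hf⟩) hneg hα (by norm_num)]
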